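/- arXiv:2404.13871 — 6 statements merged into one kernel-verified Lean document; each statement's English description precedes it below -/
import Mathlib

section
/- Let (X, d) be a semimetric space (d is symmetric, nonnegative, and d(x,y)=0 iff x=y, but the triangle inequality is not assumed). For points x, y, w ∈ X, the triangle inequality d(x,y) ≤ d(w,x) + d(w,y) holds if and only if for every t ∈ [0,1] the inequality t(1−t)·d(x,y)² ≤ (1−t)·d(w,x)² + t·d(w,y)² holds. -/
/-!
Write `a = d(w,x)`, `b = d(w,y)`, `c = d(x,y)` and `q(t) = (1-t)a² + tb² - t(1-t)c²`.
If `c ≤ a + b`, then `q(t) ≥ (1-t)a² + tb² - t(1-t)(a+b)² = ((1-t)a - tb)² ≥ 0`.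
Conversely, `q` is minimised at `t₀ = (c² + a² - b²)/(2c²)`, where
`4c² q(t₀) = (a+b-c)(a-b+c)(b+c-a)(a+b+c)` is Heron's product; if `c > a + b`, then
`t₀ ∈ [0,1]` and only the first factor is negative, so `q(t₀) < 0`.
-/

theorem quadratic_le_of_le_add {a b c t : ℝ} (hc : 0 ≤ c) (ht : t ∈ Set.Icc (0 : ℝ) 1)
    (h : c ≤ a + b) : t * (1 - t) * c ^ 2 ≤ (1 - t) * a ^ 2 + t * b ^ 2 := by
  have hweight : 0 ≤ t * (1 - t) := mul_nonneg ht.1 (sub_nonneg.2 ht.2)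
  calc t * (1 - t) * c ^ 2 ≤ t * (1 - t) * (a + b) ^ 2 := by gcongr
    _ = (1 - t) * a ^ 2 + t * b ^ 2 - ((1 - t) * a - t * b) ^ 2 := by ring
    _ ≤ (1 - t) * a ^ 2 + t * b ^ 2 := sub_le_self _ (sq_nonneg _)

theorem four_mul_sq_mul_quadratic_eq_heron {a b c t : ℝ}
    (ht : 2 * c ^ 2 * t = c ^ 2 + a ^ 2 - b ^ 2) :
    4 * c ^ 2 * ((1 - t) * a ^ 2 + t * b ^ 2 - t * (1 - t) * c ^ 2) =
      (a + b - c) * (a - b + c) * (-a + b + c) * (a + b + c) := by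
  linear_combination (2 * c ^ 2 * t - c ^ 2 - a ^ 2 + b ^ 2) * ht

theorem le_add_of_forall_quadratic_le {a b c : ℝ} (ha : 0 ≤ a) (hb : 0 ≤ b)
    (h : ∀ t ∈ Set.Icc (0 : ℝ) 1, t * (1 - t) * c ^ 2 ≤ (1 - t) * a ^ 2 + t * b ^ 2) :
    c ≤ a + b := by
  by_contra! hlt
  have hc : 0 < c := by linarith
  set t := (c ^ 2 + a ^ 2 - b ^ 2) / (2 * c ^ 2) with ht
  have ht_eq : 2 * c ^ 2 * t = c ^ 2 + a ^ 2 - b ^ 2 := by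
    rw [ht]; field_simp
  have ht_mem : t ∈ Set.Icc (0 : ℝ) 1 := by
    rw [ht, Set.mem_Icc, div_le_one (by positivity)]
    constructor
    · exact div_nonneg (by nlinarith) (by positivity)
    · nlinarith
  have hfactors : 0 < (a - b + c) * (-a + b + c) * (a + b + c) :=
    mul_pos (mul_pos (by linarith) (by linarith)) (by linarith)
  have hq : 0 ≤ 4 * c ^ 2 * ((1 - t) * a ^ 2 + t * b ^ 2 - t * (1 - t) * c ^ 2) :=
    mul_nonneg (by positivity) (sub_nonneg.2 (h t ht_mem))
  rw [four_mul_sq_mul_quadratic_eq_heron ht_eq] at hq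
  nlinarith

theorem triangle_iff_quadratic_general {X : Type*} (d : X → X → ℝ)
    (hnonneg : ∀ a b, 0 ≤ d a b)
    (x y w : X) :
    d x y ≤ d w x + d w y ↔
      ∀ t ∈ Set.Icc (0 : ℝ) 1,
        t * (1 - t) * d x y ^ 2 ≤ (1 - t) * d w x ^ 2 + t * d w y ^ 2 :=
  ⟨fun h _ ht => quadratic_le_of_le_add (hnonneg x y) ht h,
    le_add_of_forall_quadratic_le (hnonneg w x) (hnonneg w y)⟩

theorem triangle_iff_quadratic {X : Type*} (d : X → X → ℝ)
    (hsymm : ∀ a b, d a b = d b a)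
    (hnonneg : ∀ a b, 0 ≤ d a b)
    (hzero : ∀ a b, d a b = 0 ↔ a = b)
    (x y w : X) :
    d x y ≤ d w x + d w y ↔
      ∀ t ∈ Set.Icc (0 : ℝ) 1,
        t * (1 - t) * d x y ^ 2 ≤ (1 - t) * d w x ^ 2 + t * d w y ^ 2 :=
  triangle_iff_quadratic_general d hnonneg x y w
end

section
/- Let n be a positive integer, let p₁,…,pₙ, q₁,…,qₙ be nonnegative reals with ∑pᵢ = ∑qⱼ = 1, and let (πᵢⱼ) be an n×n matrix with nonnegative entries such that ∑ⱼ πᵢⱼ = pᵢ + qᵢ for every i. Let (X, d) be a CAT(0) space and x₁,…,xₙ ∈ X. Then (1/2)·∑_{i,j : πᵢⱼ+πⱼᵢ>0} (πᵢⱼπⱼᵢ/(πᵢⱼ+πⱼᵢ))·d(xᵢ,xⱼ)² ≤ ∑ᵢ∑ⱼ pᵢqⱼ·d(xᵢ,xⱼ)². -/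
private lemma scalar_pair (a b s t d : ℝ) (ha : 0 ≤ a) (hb : 0 ≤ b)
    (hs : 0 ≤ s) (ht : 0 ≤ t) (hd : 0 ≤ d) (hdst : d ≤ s + t) :
    (if 0 < a + b then a * b / (a + b) * d ^ 2 else 0) ≤ a * s ^ 2 + b * t ^ 2 := by
  split_ifs with h
  · rw [div_mul_eq_mul_div, div_le_iff₀ h]
    nlinarith [sq_nonneg (a * s - b * t), mul_nonneg (mul_nonneg ha hb)
      (mul_nonneg (sub_nonneg.2 hdst) (add_nonneg (add_nonneg hs ht) hd)), sq_nonneg (s + t - d)]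
  · positivity

private lemma exists_barycenter {X : Type*} [MetricSpace X] [CompleteSpace X]
    (hcat : ∀ x y : X, ∀ t ∈ Set.Icc (0 : ℝ) 1, ∃ z : X, ∀ w : X,
      dist w z ^ 2 ≤ (1 - t) * dist w x ^ 2 + t * dist w y ^ 2
        - t * (1 - t) * dist x y ^ 2)
    {n : ℕ} (q : Fin n → ℝ) (hq : ∀ j, 0 ≤ q j) (hqs : ∑ j, q j = 1)
    (x : Fin n → X) :
    ∃ b : X, ∀ z : X,
      dist z b ^ 2 + ∑ j, q j * dist b (x j) ^ 2 ≤ ∑ j, q j * dist z (x j) ^ 2 := by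
  have hn : 0 < n := by
    rcases Nat.eq_zero_or_pos n with h | h
    · subst h; simp at hqs
    · exact h
  set f : X → ℝ := fun z => ∑ j, q j * dist z (x j) ^ 2 with hf
  have hfc : Continuous f := by
    apply continuous_finset_sum
    intro j _
    exact continuous_const.mul ((continuous_id.dist continuous_const).pow 2)
  have hf0 : ∀ z, 0 ≤ f z := fun z =>
    Finset.sum_nonneg fun j _ => mul_nonneg (hq j) (by positivity)
  have hbdd : BddBelow (Set.range f) := ⟨0, by rintro _ ⟨z, rfl⟩; exact hf0 z⟩
  have hrne : (Set.range f).Nonempty := ⟨f (x ⟨0, hn⟩), ⟨_, rfl⟩⟩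
  set m := sInf (Set.range f) with hm
  have hm_le : ∀ z, m ≤ f z := fun z => csInf_le hbdd ⟨z, rfl⟩
  -- convexity of f along hcat points
  have key : ∀ (z₁ z₂ : X), ∀ t ∈ Set.Icc (0:ℝ) 1, ∃ c : X,
      f c ≤ (1 - t) * f z₁ + t * f z₂ - t * (1 - t) * dist z₁ z₂ ^ 2 := by
    intro z₁ z₂ t htt
    obtain ⟨c, hc⟩ := hcat z₁ z₂ t htt
    refine ⟨c, ?_⟩
    have step : ∀ j : Fin n, q j * dist c (x j) ^ 2 ≤
        (1 - t) * (q j * dist z₁ (x j) ^ 2) + t * (q j * dist z₂ (x j) ^ 2)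
          - q j * (t * (1 - t) * dist z₁ z₂ ^ 2) := by
      intro j
      have h1 := hc (x j)
      have h2 := mul_le_mul_of_nonneg_left h1 (hq j)
      rw [dist_comm (x j) c, dist_comm (x j) z₁, dist_comm (x j) z₂] at h2
      nlinarith [h2]
    calc f c = ∑ j, q j * dist c (x j) ^ 2 := rfl
      _ ≤ ∑ j, ((1 - t) * (q j * dist z₁ (x j) ^ 2) + t * (q j * dist z₂ (x j) ^ 2)
            - q j * (t * (1 - t) * dist z₁ z₂ ^ 2)) := Finset.sum_le_sum fun j _ => step j
      _ = (1 - t) * f z₁ + t * f z₂ - t * (1 - t) * dist z₁ z₂ ^ 2 := by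
          rw [Finset.sum_sub_distrib, Finset.sum_add_distrib, ← Finset.mul_sum,
            ← Finset.mul_sum, ← Finset.sum_mul, hqs, one_mul]
  -- minimizing sequence
  have hseq : ∀ k : ℕ, ∃ z : X, f z < m + 1 / (k + 1) := by
    intro k
    have hpos : (0:ℝ) < 1 / (k + 1) := by positivity
    obtain ⟨_, ⟨z, rfl⟩, hz⟩ := Real.lt_sInf_add_pos hrne hpos
    exact ⟨z, hz⟩
  choose u hu using hseq
  have hdist : ∀ j k : ℕ, dist (u j) (u k) ^ 2 ≤ 2 * (1/(j+1)) + 2 * (1/(k+1)) := by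
    intro j k
    obtain ⟨c, hc⟩ := key (u j) (u k) (1/2) (by norm_num)
    have h1 := hm_le c
    have h2 := hu j
    have h3 := hu k
    nlinarith [h1, h2, h3, hc]
  have hcauchy : CauchySeq u := by
    rw [Metric.cauchySeq_iff]
    intro ε hε
    obtain ⟨N, hN⟩ := exists_nat_gt (4 / ε ^ 2)
    refine ⟨N, fun a ha b hb => ?_⟩
    have hNpos : (0:ℝ) < N + 1 := by positivity
    have h4 : 4 / ((N:ℝ) + 1) < ε ^ 2 := by
      rw [div_lt_iff₀ hNpos]
      have h5 : 4 / ε ^ 2 < (N:ℝ) + 1 := lt_of_lt_of_le hN (by linarith)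
      rw [div_lt_iff₀ (by positivity)] at h5
      nlinarith [h5]
    have ha1 : (1:ℝ)/(a+1) ≤ 1/(N+1) := by
      apply one_div_le_one_div_of_le hNpos
      exact_mod_cast Nat.succ_le_succ ha
    have hb1 : (1:ℝ)/(b+1) ≤ 1/(N+1) := by
      apply one_div_le_one_div_of_le hNpos
      exact_mod_cast Nat.succ_le_succ hb
    have h4' : 4 * (1/((N:ℝ)+1)) < ε ^ 2 := by rw [mul_one_div]; exact h4
    have hlt : dist (u a) (u b) ^ 2 < ε ^ 2 := by
      have := hdist a b
      linarith [this, ha1, hb1, h4']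
    exact lt_of_pow_lt_pow_left₀ 2 (le_of_lt hε) hlt
  obtain ⟨b, hb⟩ := cauchySeq_tendsto_of_complete hcauchy
  have hfb : f b = m := by
    have h1 : Filter.Tendsto (fun k => f (u k)) Filter.atTop (nhds (f b)) :=
      (hfc.tendsto b).comp hb
    have h2 : Filter.Tendsto (fun k => f (u k)) Filter.atTop (nhds m) := by
      have hup : Filter.Tendsto (fun k : ℕ => m + 1/((k:ℝ)+1)) Filter.atTop (nhds (m + 0)) :=
        tendsto_const_nhds.add tendsto_one_div_add_atTop_nhds_zero_nat
      rw [add_zero] at hup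
      exact tendsto_of_tendsto_of_tendsto_of_le_of_le tendsto_const_nhds hup
        (fun k => hm_le (u k)) (fun k => (hu k).le)
    exact tendsto_nhds_unique h1 h2
  refine ⟨b, fun z => ?_⟩
  have hC : ∀ t : ℝ, t ∈ Set.Ioo (0:ℝ) 1 → (1 - t) * dist b z ^ 2 ≤ f z - m := by
    intro t ht
    obtain ⟨c, hc⟩ := key b z t ⟨ht.1.le, ht.2.le⟩
    have h1 := hm_le c
    rw [hfb] at hc
    have h' : t * ((1-t) * dist b z ^ 2) ≤ t * (f z - m) := by nlinarith [h1, hc]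
    exact le_of_mul_le_mul_left h' ht.1
  have hD : dist b z ^ 2 ≤ f z - m := by
    set D := dist b z ^ 2 with hDdef
    set C := f z - m with hCdef
    have h2 : (1 - (1/2:ℝ)) * D ≤ C := hC (1/2) (by norm_num)
    by_contra hlt
    push_neg at hlt
    have hDpos : 0 < D := by nlinarith
    have hC0 : 0 ≤ C := by nlinarith
    have htm : (D - C)/(2*D) ∈ Set.Ioo (0:ℝ) 1 := by
      constructor
      · exact div_pos (by linarith) (by linarith)
      · rw [div_lt_one (by linarith)]
        nlinarith
    have h3 := hC _ htm
    have h5 : (1 - (D - C)/(2*D)) * D = D - (D - C)/2 := by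
      field_simp
    rw [h5] at h3
    linarith
  have : dist z b ^ 2 + f b ≤ f z := by
    rw [hfb, dist_comm z b]
    linarith [hD]
  exact this

theorem ANN_inequality {X : Type*} [MetricSpace X] [CompleteSpace X]
    (hcat : ∀ x y : X, ∀ t ∈ Set.Icc (0 : ℝ) 1, ∃ z : X, ∀ w : X,
      dist w z ^ 2 ≤ (1 - t) * dist w x ^ 2 + t * dist w y ^ 2
        - t * (1 - t) * dist x y ^ 2)
    (n : ℕ) (hn : 0 < n) (p q : Fin n → ℝ) (pi : Fin n → Fin n → ℝ)
    (hp : ∀ i, 0 ≤ p i) (hq : ∀ j, 0 ≤ q j) (hpi : ∀ i j, 0 ≤ pi i j)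
    (hps : ∑ i, p i = 1) (hqs : ∑ j, q j = 1)
    (hrow : ∀ i, ∑ j, pi i j = p i + q i)
    (x : Fin n → X) :
    (1 / 2) * ∑ i, ∑ j,
        (if 0 < pi i j + pi j i then
          pi i j * pi j i / (pi i j + pi j i) * dist (x i) (x j) ^ 2 else 0)
      ≤ ∑ i, ∑ j, p i * q j * dist (x i) (x j) ^ 2 := by
  obtain ⟨b, hb⟩ := exists_barycenter hcat q hq hqs x
  set s : Fin n → ℝ := fun i => dist (x i) b with hs
  -- Step 1: per-pair bound
  have step1 : ∑ i, ∑ j,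
      (if 0 < pi i j + pi j i then
        pi i j * pi j i / (pi i j + pi j i) * dist (x i) (x j) ^ 2 else 0)
      ≤ ∑ i, ∑ j, (pi i j * s i ^ 2 + pi j i * s j ^ 2) := by
    refine Finset.sum_le_sum fun i _ => Finset.sum_le_sum fun j _ => ?_
    refine scalar_pair _ _ _ _ _ (hpi i j) (hpi j i) dist_nonneg dist_nonneg dist_nonneg ?_
    have h := dist_triangle (x i) b (x j)
    rw [dist_comm b (x j)] at h
    exact h
  -- Step 2: row sums
  have step2 : ∑ i, ∑ j, (pi i j * s i ^ 2 + pi j i * s j ^ 2)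
      = 2 * ∑ i, (p i + q i) * s i ^ 2 := by
    have t1 : ∑ i, ∑ j, pi i j * s i ^ 2 = ∑ i, (p i + q i) * s i ^ 2 :=
      Finset.sum_congr rfl fun i _ => by rw [← Finset.sum_mul, hrow i]
    have t2 : ∑ i, ∑ j, pi j i * s j ^ 2 = ∑ i, (p i + q i) * s i ^ 2 := by
      rw [Finset.sum_comm]
      exact Finset.sum_congr rfl fun j _ => by rw [← Finset.sum_mul, hrow j]
    simp only [Finset.sum_add_distrib, t1, t2]
    ring
  -- Step 3: variance inequality
  have step3 : ∑ i, (p i + q i) * s i ^ 2 ≤ ∑ i, ∑ j, p i * q j * dist (x i) (x j) ^ 2 := by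
    set V := ∑ j, q j * dist b (x j) ^ 2 with hV
    have hVq : ∑ i, q i * s i ^ 2 = V := by
      refine Finset.sum_congr rfl fun i _ => ?_
      rw [hs]
      simp [dist_comm]
    have h1 : ∀ i, p i * (s i ^ 2 + V) ≤ ∑ j, p i * (q j * dist (x i) (x j) ^ 2) := by
      intro i
      rw [← Finset.mul_sum]
      exact mul_le_mul_of_nonneg_left (hb (x i)) (hp i)
    have heq : ∑ i, (p i + q i) * s i ^ 2 = ∑ i, p i * (s i ^ 2 + V) := by
      have e1 : ∑ i, p i * (s i ^ 2 + V) = (∑ i, p i * s i ^ 2) + (∑ i, p i) * V := by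
        simp only [mul_add, Finset.sum_add_distrib, Finset.sum_mul]
      rw [e1, hps, one_mul, ← hVq]
      simp only [add_mul, Finset.sum_add_distrib]
    rw [heq]
    calc ∑ i, p i * (s i ^ 2 + V)
        ≤ ∑ i, ∑ j, p i * (q j * dist (x i) (x j) ^ 2) := Finset.sum_le_sum fun i _ => h1 i
      _ = ∑ i, ∑ j, p i * q j * dist (x i) (x j) ^ 2 := by
          refine Finset.sum_congr rfl fun i _ => Finset.sum_congr rfl fun j _ => ?_
          ring
  linarith [step1, step2, step3]
end

section
/- Let n be a positive integer, p₁,…,pₙ, q₁,…,qₙ nonnegative reals with ∑pᵢ = ∑qⱼ = 1, and (πᵢⱼ) an n×n nonnegative matrix with ∑ⱼ πᵢⱼ = pᵢ + qᵢ for all i. Let (X,d) be a CAT(0) space, x₁,…,xₙ ∈ X, let z be the barycenter of ∑pᵢδ_{xᵢ}, and for i,j with πᵢⱼ+πⱼᵢ > 0 let zᵢⱼ be the barycenter of (πᵢⱼδ_{xᵢ}+πⱼᵢδ_{xⱼ})/(πᵢⱼ+πⱼᵢ). Then ∑_{i,j: πᵢⱼ+πⱼᵢ>0} πᵢⱼ·d(z,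 zᵢⱼ)² + (1/2)·∑_{i,j: πᵢⱼ+πⱼᵢ>0} (πᵢⱼπⱼᵢ/(πᵢⱼ+πⱼᵢ))·d(xᵢ,xⱼ)² ≤ ∑ᵢ∑ⱼ pᵢqⱼ·d(xᵢ,xⱼ)². -/
/-!
Evaluate the barycenter inequality of `z_ij` at `w = z`: `d(z, z_ij)²` plus the variance of the
pair measure is at most the mean of `d(z, ·)²` under it, and by the triangle inequality the variance
of a two-point measure with weights `a + b = 1` is at least `a b d(x_i, x_j)²`. Multiplied by `π_ij`
and summed, these bounds symmetrize: the variance terms add up to the second sum of the claim, and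
the right-hand sides to `∑ (p_i + q_i) d(z, x_i)²`, since the rows of `π` sum to `p_i + q_i`.
Averaging the barycenter inequality of `z` at `w = x_j` with weights `q_j` bounds this by
`∑ p_i q_j d(x_i, x_j)²`.
-/

open Finset

section Barycenter

variable {X : Type*} [MetricSpace X] {ι : Type*} [Fintype ι]

def IsBarycenter (p : ι → ℝ) (x : ι → X) (z : X) : Prop :=
  ∀ w, dist w z ^ 2 + ∑ i, p i * dist z (x i) ^ 2 ≤ ∑ i, p i * dist w (x i) ^ 2

-- `(a + b) (a u² + b v²) - a b (u + v)² = (a u - b v)²`, and `d(x, y) ≤ u + v`.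
theorem mul_mul_dist_sq_le {a b : ℝ} (ha : 0 ≤ a) (hb : 0 ≤ b) (m x y : X) :
    a * b * dist x y ^ 2 ≤ (a + b) * (a * dist m x ^ 2 + b * dist m y ^ 2) := by
  have htri : dist x y ≤ dist m x + dist m y := dist_triangle_left x y m
  have hsq : dist x y ^ 2 ≤ (dist m x + dist m y) ^ 2 := by gcongr
  nlinarith [sq_nonneg (a * dist m x - b * dist m y),
    mul_le_mul_of_nonneg_left hsq (mul_nonneg ha hb)]

theorem IsBarycenter.dist_sq_add_mul_mul_dist_sq_le {a b : ℝ} {x y m : X} (ha : 0 ≤ a)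
    (hb : 0 ≤ b) (hab : a + b = 1) (hm : IsBarycenter ![a, b] ![x, y] m) (w : X) :
    dist w m ^ 2 + a * b * dist x y ^ 2 ≤ a * dist w x ^ 2 + b * dist w y ^ 2 := by
  have hw := hm w
  have hvar := mul_mul_dist_sq_le ha hb m x y
  simp only [Fin.sum_univ_two, Matrix.cons_val_zero, Matrix.cons_val_one] at hw
  rw [hab, one_mul] at hvar
  linarith

theorem IsBarycenter.sum_add_mul_dist_sq_le {p q : ι → ℝ} {x : ι → X} {z : X}
    (hz : IsBarycenter p x z) (hq : ∀ j, 0 ≤ q j) (hqs : ∑ j, q j = 1) :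
    ∑ i, (p i + q i) * dist z (x i) ^ 2 ≤ ∑ i, ∑ j, p i * q j * dist (x i) (x j) ^ 2 :=
  calc ∑ i, (p i + q i) * dist z (x i) ^ 2
      = ∑ j, q j * (dist (x j) z ^ 2 + ∑ i, p i * dist z (x i) ^ 2) := by
        simp only [mul_add, add_mul, sum_add_distrib, ← sum_mul, hqs, one_mul,
          dist_comm (x _) z]
        ring
    _ ≤ ∑ j, q j * ∑ i, p i * dist (x j) (x i) ^ 2 := by
        gcongr with j
        · exact hq j
        · exact hz (x j)
    _ = ∑ i, ∑ j, p i * q j * dist (x i) (x j) ^ 2 := by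
        rw [sum_comm]
        refine sum_congr rfl fun j _ => ?_
        rw [mul_sum]
        refine sum_congr rfl fun i _ => ?_
        rw [dist_comm]
        ring

end Barycenter

section PairWeight

variable {ι : Type*}

/-- The weight of `x i` in `(π i j δ_{x i} + π j i δ_{x j}) / (π i j + π j i)`; it is `0` when
`π i j + π j i = 0`. -/
noncomputable def pairWeight (π : ι → ι → ℝ) (i j : ι) : ℝ := π i j / (π i j + π j i)

theorem pairWeight_nonneg {π : ι → ι → ℝ} (hπ : ∀ i j, 0 ≤ π i j) (i j : ι) :
    0 ≤ pairWeight π i j :=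
  div_nonneg (hπ i j) (add_nonneg (hπ i j) (hπ j i))

theorem pairWeight_add_pairWeight_swap {π : ι → ι → ℝ} {i j : ι} (h : π i j + π j i ≠ 0) :
    pairWeight π i j + pairWeight π j i = 1 := by
  rw [pairWeight, pairWeight, add_comm (π j i), ← add_div, div_self h]

theorem mul_dist_sq_add_le_of_isBarycenter_pairWeight {X : Type*} [MetricSpace X]
    {π : ι → ι → ℝ} (hπ : ∀ i j, 0 ≤ π i j) {x : ι → X} {i j : ι} {m : X}
    (hm : 0 < π i j + π j i → IsBarycenter ![pairWeight π i j, pairWeight π j i] ![x i, x j] m)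
    (w : X) :
    π i j * (dist w m ^ 2 + pairWeight π i j * pairWeight π j i * dist (x i) (x j) ^ 2)
      ≤ π i j * (pairWeight π i j * dist w (x i) ^ 2 + pairWeight π j i * dist w (x j) ^ 2) := by
  rcases (hπ i j).eq_or_lt with h | h
  · simp [← h]
  · have hs : 0 < π i j + π j i := add_pos_of_pos_of_nonneg h (hπ j i)
    exact mul_le_mul_of_nonneg_left ((hm hs).dist_sq_add_mul_mul_dist_sq_le
      (pairWeight_nonneg hπ i j) (pairWeight_nonneg hπ j i)
      (pairWeight_add_pairWeight_swap hs.ne') w) h.le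

variable [Fintype ι]

theorem sum_sum_mul_pairWeight_mul_pairWeight (π f : ι → ι → ℝ) (hf : ∀ i j, f i j = f j i) :
    ∑ i, ∑ j, π i j * (pairWeight π i j * pairWeight π j i * f i j)
      = 1 / 2 * ∑ i, ∑ j, π i j * π j i / (π i j + π j i) * f i j := by
  set T := ∑ i, ∑ j, π i j * (pairWeight π i j * pairWeight π j i * f i j)
  have hswap : T = ∑ i, ∑ j, π j i * (pairWeight π j i * pairWeight π i j * f j i) := sum_comm
  have hpair : ∀ i j, π i j * (pairWeight π i j * pairWeight π j i * f i j)
      + π j i * (pairWeight π j i * pairWeight π i j * f j i)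
      = π i j * π j i / (π i j + π j i) * f i j := by
    intro i j
    rw [← hf, pairWeight, pairWeight, add_comm (π j i)]
    by_cases hs : π i j + π j i = 0
    · simp [hs]
    · field_simp
  calc T = 1 / 2 * (T + T) := by ring
    _ = 1 / 2 * ∑ i, ∑ j, (π i j * (pairWeight π i j * pairWeight π j i * f i j)
          + π j i * (pairWeight π j i * pairWeight π i j * f j i)) := by
      nth_rw 2 [hswap]
      simp only [T, sum_add_distrib]
    _ = _ := by simp only [hpair]

theorem sum_sum_mul_pairWeight_add {π : ι → ι → ℝ} (hπ : ∀ i j, 0 ≤ π i j) (g : ι → ℝ) :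
    ∑ i, ∑ j, π i j * (pairWeight π i j * g i + pairWeight π j i * g j)
      = ∑ i, (∑ j, π i j) * g i := by
  have hswap : ∑ i, ∑ j, π i j * (pairWeight π j i * g j)
      = ∑ i, ∑ j, π j i * (pairWeight π i j * g i) := sum_comm
  have hpair : ∀ i j, π i j * (pairWeight π i j * g i) + π j i * (pairWeight π i j * g i)
      = π i j * g i := by
    intro i j
    rw [pairWeight]
    by_cases hs : π i j + π j i = 0
    · have hij : π i j = 0 := by linarith [hπ i j, hπ j i]
      simp [hij]
    · field_simp
  calc _ = ∑ i, ∑ j, π i j * (pairWeight π i j * g i)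
        + ∑ i, ∑ j, π i j * (pairWeight π j i * g j) := by simp only [mul_add, sum_add_distrib]
    _ = ∑ i, ∑ j, (π i j * (pairWeight π i j * g i) + π j i * (pairWeight π i j * g i)) := by
        rw [hswap]; simp only [sum_add_distrib]
    _ = _ := by simp only [hpair, sum_mul]

end PairWeight

theorem ite_pos_add_eq_self {a b y : ℝ} (ha : 0 ≤ a) (hb : 0 ≤ b) (hy : a = 0 → y = 0) :
    (if 0 < a + b then y else 0) = y :=
  ite_eq_left_iff.2 fun hs => (hy (le_antisymm (by linarith [not_lt.1 hs]) ha)).symm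

theorem ANN_inequality_with_barycenters_general {X : Type*} [MetricSpace X]
    (n : ℕ) (p q : Fin n → ℝ) (pi : Fin n → Fin n → ℝ)
    (hq : ∀ j, 0 ≤ q j) (hpi : ∀ i j, 0 ≤ pi i j)
    (hqs : ∑ j, q j = 1)
    (hrow : ∀ i, ∑ j, pi i j = p i + q i)
    (x : Fin n → X) (z : X)
    (hz : ∀ w : X, dist w z ^ 2 + ∑ i, p i * dist z (x i) ^ 2
      ≤ ∑ i, p i * dist w (x i) ^ 2)
    (zz : Fin n → Fin n → X)
    (hzz : ∀ i j, 0 < pi i j + pi j i → ∀ w : X,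
      dist w (zz i j) ^ 2
        + (pi i j / (pi i j + pi j i)) * dist (zz i j) (x i) ^ 2
        + (pi j i / (pi i j + pi j i)) * dist (zz i j) (x j) ^ 2
      ≤ (pi i j / (pi i j + pi j i)) * dist w (x i) ^ 2
        + (pi j i / (pi i j + pi j i)) * dist w (x j) ^ 2) :
    (∑ i, ∑ j, (if 0 < pi i j + pi j i then pi i j * dist z (zz i j) ^ 2 else 0))
      + (1 / 2) * ∑ i, ∑ j,
          (if 0 < pi i j + pi j i then
            pi i j * pi j i / (pi i j + pi j i) * dist (x i) (x j) ^ 2 else 0)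
      ≤ ∑ i, ∑ j, p i * q j * dist (x i) (x j) ^ 2 := by
  have hbar : ∀ i j, 0 < pi i j + pi j i →
      IsBarycenter ![pairWeight pi i j, pairWeight pi j i] ![x i, x j] (zz i j) := fun i j hs w => by
    simpa [IsBarycenter, Fin.sum_univ_two, pairWeight, add_comm (pi j i), add_assoc]
      using hzz i j hs w
  have hdist : ∀ i j, (if 0 < pi i j + pi j i then pi i j * dist z (zz i j) ^ 2 else 0)
      = pi i j * dist z (zz i j) ^ 2 :=
    fun i j => ite_pos_add_eq_self (hpi i j) (hpi j i) fun h => by simp [h]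
  have hcross : ∀ i j, (if 0 < pi i j + pi j i then
        pi i j * pi j i / (pi i j + pi j i) * dist (x i) (x j) ^ 2 else 0)
      = pi i j * pi j i / (pi i j + pi j i) * dist (x i) (x j) ^ 2 :=
    fun i j => ite_pos_add_eq_self (hpi i j) (hpi j i) fun h => by simp [h]
  simp only [hdist, hcross]
  calc _ = ∑ i, ∑ j, pi i j * (dist z (zz i j) ^ 2
          + pairWeight pi i j * pairWeight pi j i * dist (x i) (x j) ^ 2) := by
        rw [← sum_sum_mul_pairWeight_mul_pairWeight pi (fun i j => dist (x i) (x j) ^ 2)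
          fun i j => by rw [dist_comm]]
        simp only [mul_add, sum_add_distrib]
    _ ≤ ∑ i, ∑ j, pi i j * (pairWeight pi i j * dist z (x i) ^ 2
          + pairWeight pi j i * dist z (x j) ^ 2) :=
        sum_le_sum fun i _ => sum_le_sum fun j _ =>
          mul_dist_sq_add_le_of_isBarycenter_pairWeight hpi (hbar i j) z
    _ = ∑ i, (p i + q i) * dist z (x i) ^ 2 := by
        simp only [← hrow]
        exact sum_sum_mul_pairWeight_add hpi _
    _ ≤ _ := IsBarycenter.sum_add_mul_dist_sq_le hz hq hqs

theorem ANN_inequality_with_barycenters {X : Type*} [MetricSpace X] [CompleteSpace X]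
    (hcat : ∀ x y : X, ∀ t ∈ Set.Icc (0 : ℝ) 1, ∃ z : X, ∀ w : X,
      dist w z ^ 2 ≤ (1 - t) * dist w x ^ 2 + t * dist w y ^ 2
        - t * (1 - t) * dist x y ^ 2)
    (n : ℕ) (hn : 0 < n) (p q : Fin n → ℝ) (pi : Fin n → Fin n → ℝ)
    (hp : ∀ i, 0 ≤ p i) (hq : ∀ j, 0 ≤ q j) (hpi : ∀ i j, 0 ≤ pi i j)
    (hps : ∑ i, p i = 1) (hqs : ∑ j, q j = 1)
    (hrow : ∀ i, ∑ j, pi i j = p i + q i)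
    (x : Fin n → X) (z : X)
    (hz : ∀ w : X, dist w z ^ 2 + ∑ i, p i * dist z (x i) ^ 2
      ≤ ∑ i, p i * dist w (x i) ^ 2)
    (zz : Fin n → Fin n → X)
    (hzz : ∀ i j, 0 < pi i j + pi j i → ∀ w : X,
      dist w (zz i j) ^ 2
        + (pi i j / (pi i j + pi j i)) * dist (zz i j) (x i) ^ 2
        + (pi j i / (pi i j + pi j i)) * dist (zz i j) (x j) ^ 2
      ≤ (pi i j / (pi i j + pi j i)) * dist w (x i) ^ 2
        + (pi j i / (pi i j + pi j i)) * dist w (x j) ^ 2) :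
    (∑ i, ∑ j, (if 0 < pi i j + pi j i then pi i j * dist z (zz i j) ^ 2 else 0))
      + (1 / 2) * ∑ i, ∑ j,
          (if 0 < pi i j + pi j i then
            pi i j * pi j i / (pi i j + pi j i) * dist (x i) (x j) ^ 2 else 0)
      ≤ ∑ i, ∑ j, p i * q j * dist (x i) (x j) ^ 2 :=
  ANN_inequality_with_barycenters_general n p q pi hq hpi hqs hrow x z hz zz hzz
end

section
/- Let n be a positive integer and let X = {x₁,…,xₙ} be an n-point semimetric space. Suppose that for all nonnegative reals p₁,…,pₙ, q₁,…,qₙ with ∑pᵢ = ∑qⱼ = 1 and every n×n nonnegative matrix (πᵢⱼ) with ∑ₖ πᵢₖ = pᵢ + qᵢ for each i, the inequality (1/2)∑_{i,j: πᵢⱼ+πⱼᵢ>0}(πᵢⱼπⱼᵢ/(πᵢⱼ+πⱼᵢ))d(xᵢ,xⱼ)² ≤ ∑ᵢ∑ⱼ pᵢqⱼ d(xᵢ,xⱼ)² holds. Then for every positive integer m, every map φ: [m] → [n], all nonnegative reals p̂₁,…,p̂ₘ, q̂₁,…,q̂ₘ with ∑p̂ᵢ = ∑q̂ⱼ = 1,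 and every m×m nonnegative matrix (π̂ᵢⱼ) with ∑ₖ π̂ᵢₖ = p̂ᵢ + q̂ᵢ for each i, the analogous inequality holds for the points x_{φ(1)},…,x_{φ(m)}. -/
noncomputable def gfun (a b : ℝ) : ℝ := if 0 < a + b then a * b / (a + b) else 0

lemma gfun_nonneg {a b : ℝ} (ha : 0 ≤ a) (hb : 0 ≤ b) : 0 ≤ gfun a b := by
  unfold gfun; split
  · positivity
  · exact le_refl 0

lemma gfun_super {a b c e : ℝ} (ha : 0 ≤ a) (hb : 0 ≤ b) (hc : 0 ≤ c) (he : 0 ≤ e) :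
    gfun a b + gfun c e ≤ gfun (a + c) (b + e) := by
  unfold gfun
  by_cases h1 : 0 < a + b
  · by_cases h2 : 0 < c + e
    · have h3 : 0 < a + c + (b + e) := by linarith
      rw [if_pos h1, if_pos h2, if_pos h3, div_add_div _ _ (ne_of_gt h1) (ne_of_gt h2),
        div_le_div_iff₀ (by positivity) h3]
      nlinarith [sq_nonneg (a * e - b * c), mul_nonneg ha he, mul_nonneg hb hc,
        mul_nonneg (mul_nonneg ha hb) (mul_nonneg hc he)]
    · have hc0 : c = 0 := by linarith [le_of_not_gt h2]
      have he0 : e = 0 := by linarith [le_of_not_gt h2]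
      subst hc0; subst he0
      simp [h1]
  · have ha0 : a = 0 := by linarith [le_of_not_gt h1]
    have hb0 : b = 0 := by linarith [le_of_not_gt h1]
    subst ha0; subst hb0
    simp [h1]

lemma gfun_sum {ι : Type*} (s : Finset ι) (u v : ι → ℝ)
    (hu : ∀ t ∈ s, 0 ≤ u t) (hv : ∀ t ∈ s, 0 ≤ v t) :
    ∑ t ∈ s, gfun (u t) (v t) ≤ gfun (∑ t ∈ s, u t) (∑ t ∈ s, v t) := by
  induction s using Finset.cons_induction with
  | empty => simp [gfun]
  | cons a s ha ih =>
    rw [Finset.sum_cons, Finset.sum_cons, Finset.sum_cons]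
    have h1 := ih (fun t ht => hu t (Finset.mem_cons_of_mem ht))
      (fun t ht => hv t (Finset.mem_cons_of_mem ht))
    have h2 := gfun_super (hu a (Finset.mem_cons_self a s)) (hv a (Finset.mem_cons_self a s))
      (Finset.sum_nonneg fun t ht => hu t (Finset.mem_cons_of_mem ht))
      (Finset.sum_nonneg fun t ht => hv t (Finset.mem_cons_of_mem ht))
    linarith

lemma swap4 {α β : Type*} [Fintype α] [Fintype β] (F : β → β → α → α → ℝ) :
    ∑ a : β, ∑ b : β, ∑ i : α, ∑ j : α, F a b i j
      = ∑ i : α, ∑ j : α, ∑ a : β, ∑ b : β, F a b i j :=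
  calc ∑ a : β, ∑ b : β, ∑ i : α, ∑ j : α, F a b i j
      = ∑ a : β, ∑ i : α, ∑ b : β, ∑ j : α, F a b i j :=
        Finset.sum_congr rfl fun a _ => Finset.sum_comm
    _ = ∑ i : α, ∑ a : β, ∑ b : β, ∑ j : α, F a b i j := Finset.sum_comm
    _ = ∑ i : α, ∑ a : β, ∑ j : α, ∑ b : β, F a b i j :=
        Finset.sum_congr rfl fun i _ => Finset.sum_congr rfl fun a _ => Finset.sum_comm
    _ = ∑ i : α, ∑ j : α, ∑ a : β, ∑ b : β, F a b i j :=
        Finset.sum_congr rfl fun i _ => Finset.sum_comm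

lemma collapse2 {m n : ℕ} (φ : Fin m → Fin n) (G : Fin m → Fin m → ℝ) :
    (∑ a : Fin n, ∑ b : Fin n, ∑ i : Fin m, ∑ j : Fin m,
      if φ i = a ∧ φ j = b then G i j else 0) = ∑ i, ∑ j, G i j := by
  rw [swap4 (fun a b i j => if φ i = a ∧ φ j = b then G i j else 0)]
  refine Finset.sum_congr rfl fun i _ => Finset.sum_congr rfl fun j _ => ?_
  simp [ite_and, Finset.sum_ite_eq]

theorem ANN_n_implies_ANN_m_on_npoint {X : Type*} (d : X → X → ℝ)
    (hsymm : ∀ a b, d a b = d b a)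
    (hnonneg : ∀ a b, 0 ≤ d a b)
    (hzero : ∀ a b, d a b = 0 ↔ a = b)
    (n : ℕ) (hn : 0 < n) (x : Fin n → X) (hx : Function.Bijective x)
    (hANN : ∀ (p q : Fin n → ℝ) (pi : Fin n → Fin n → ℝ),
      (∀ i, 0 ≤ p i) → (∀ j, 0 ≤ q j) → (∀ i j, 0 ≤ pi i j) →
      (∑ i, p i = 1) → (∑ j, q j = 1) →
      (∀ i, ∑ k, pi i k = p i + q i) →
      (1 / 2) * ∑ i, ∑ j,
          (if 0 < pi i j + pi j i then
            pi i j * pi j i / (pi i j + pi j i) * d (x i) (x j) ^ 2 else 0)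
        ≤ ∑ i, ∑ j, p i * q j * d (x i) (x j) ^ 2) :
    ∀ (m : ℕ), 0 < m → ∀ (φ : Fin m → Fin n)
      (p' q' : Fin m → ℝ) (pi' : Fin m → Fin m → ℝ),
      (∀ i, 0 ≤ p' i) → (∀ j, 0 ≤ q' j) → (∀ i j, 0 ≤ pi' i j) →
      (∑ i, p' i = 1) → (∑ j, q' j = 1) →
      (∀ i, ∑ k, pi' i k = p' i + q' i) →
      (1 / 2) * ∑ i, ∑ j,
          (if 0 < pi' i j + pi' j i then
            pi' i j * pi' j i / (pi' i j + pi' j i) * d (x (φ i)) (x (φ j)) ^ 2 else 0)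
        ≤ ∑ i, ∑ j, p' i * q' j * d (x (φ i)) (x (φ j)) ^ 2 := by
  intro m hm φ p' q' pi' hp' hq' hpi' hps hqs hrow
  set p : Fin n → ℝ := fun a => ∑ i, if φ i = a then p' i else 0 with hp_def
  set q : Fin n → ℝ := fun b => ∑ j, if φ j = b then q' j else 0 with hq_def
  set Pi : Fin n → Fin n → ℝ :=
    fun a b => ∑ i, ∑ j, if φ i = a ∧ φ j = b then pi' i j else 0 with hPi_def
  have hp : ∀ a, 0 ≤ p a := by
    intro a
    refine Finset.sum_nonneg fun i _ => ?_
    split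
    · exact hp' i
    · exact le_refl 0
  have hq : ∀ b, 0 ≤ q b := by
    intro b
    refine Finset.sum_nonneg fun j _ => ?_
    split
    · exact hq' j
    · exact le_refl 0
  have hPi : ∀ a b, 0 ≤ Pi a b := by
    intro a b
    refine Finset.sum_nonneg fun i _ => Finset.sum_nonneg fun j _ => ?_
    split
    · exact hpi' i j
    · exact le_refl 0
  have hpsum : ∑ a, p a = 1 := by
    rw [hp_def, Finset.sum_comm]
    simpa [Finset.sum_ite_eq] using hps
  have hqsum : ∑ b, q b = 1 := by
    rw [hq_def, Finset.sum_comm]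
    simpa [Finset.sum_ite_eq] using hqs
  have hrowPi : ∀ a, ∑ b, Pi a b = p a + q a := by
    intro a
    have h : ∀ i : Fin m, (∑ b, ∑ j, if φ i = a ∧ φ j = b then pi' i j else 0)
        = (if φ i = a then p' i else 0) + (if φ i = a then q' i else 0) := by
      intro i
      rw [Finset.sum_comm]
      by_cases h : φ i = a
      · simp [h, Finset.sum_ite_eq, hrow i]
      · simp [h]
    rw [hPi_def]
    simp only
    rw [Finset.sum_comm, Finset.sum_congr rfl fun i _ => h i, Finset.sum_add_distrib]
  have key := hANN p q Pi hp hq hPi hpsum hqsum hrowPi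
  -- RHS equality
  have hRHS : (∑ a, ∑ b, p a * q b * d (x a) (x b) ^ 2)
      = ∑ i, ∑ j, p' i * q' j * d (x (φ i)) (x (φ j)) ^ 2 := by
    have step : ∀ a b, p a * q b * d (x a) (x b) ^ 2
        = ∑ i, ∑ j, if φ i = a ∧ φ j = b then
            p' i * q' j * d (x (φ i)) (x (φ j)) ^ 2 else 0 := by
      intro a b
      rw [hp_def, hq_def]
      simp only
      rw [Finset.sum_mul_sum, Finset.sum_mul]
      refine Finset.sum_congr rfl fun i _ => ?_
      rw [Finset.sum_mul]
      refine Finset.sum_congr rfl fun j _ => ?_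
      by_cases h1 : φ i = a <;> by_cases h2 : φ j = b <;> simp [h1, h2]
    rw [Finset.sum_congr rfl fun a _ => Finset.sum_congr rfl fun b _ => step a b,
      collapse2]
  -- LHS inequality per (a, b)
  have key2 : ∀ a b : Fin n,
      (∑ i, ∑ j, if φ i = a ∧ φ j = b then
          gfun (pi' i j) (pi' j i) * d (x (φ i)) (x (φ j)) ^ 2 else 0)
      ≤ gfun (Pi a b) (Pi b a) * d (x a) (x b) ^ 2 := by
    intro a b
    set s : Finset (Fin m × Fin m) :=
      (Finset.univ ×ˢ Finset.univ).filter fun t : Fin m × Fin m => φ t.1 = a ∧ φ t.2 = b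
      with hs_def
    have hA : (∑ i, ∑ j, if φ i = a ∧ φ j = b then
          gfun (pi' i j) (pi' j i) * d (x (φ i)) (x (φ j)) ^ 2 else 0)
        = ∑ t ∈ s, gfun (pi' t.1 t.2) (pi' t.2 t.1) * d (x a) (x b) ^ 2 := by
      rw [hs_def, Finset.sum_filter, ← Finset.sum_product']
      refine Finset.sum_congr rfl fun t _ => ?_
      by_cases h : φ t.1 = a ∧ φ t.2 = b
      · simp [h, h.1, h.2]
      · simp [h]
    have hB : Pi a b = ∑ t ∈ s, pi' t.1 t.2 := by
      rw [hPi_def, hs_def]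
      simp only
      rw [Finset.sum_filter, ← Finset.sum_product']
    have hC : Pi b a = ∑ t ∈ s, pi' t.2 t.1 := by
      rw [hPi_def, hs_def]
      simp only
      rw [Finset.sum_filter, ← Finset.sum_product']
      exact Fintype.sum_equiv (Equiv.prodComm (Fin m) (Fin m)) _ _
        (fun t => if_congr and_comm rfl rfl)
    rw [hA, hB, hC, ← Finset.sum_mul]
    exact mul_le_mul_of_nonneg_right
      (gfun_sum s _ _ (fun t _ => hpi' _ _) (fun t _ => hpi' _ _)) (by positivity)
  have hF'g : ∀ i j : Fin m,
      (if 0 < pi' i j + pi' j i then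
        pi' i j * pi' j i / (pi' i j + pi' j i) * d (x (φ i)) (x (φ j)) ^ 2 else 0)
      = gfun (pi' i j) (pi' j i) * d (x (φ i)) (x (φ j)) ^ 2 := by
    intro i j; unfold gfun; split <;> simp
  have hFg : ∀ a b : Fin n,
      (if 0 < Pi a b + Pi b a then
        Pi a b * Pi b a / (Pi a b + Pi b a) * d (x a) (x b) ^ 2 else 0)
      = gfun (Pi a b) (Pi b a) * d (x a) (x b) ^ 2 := by
    intro a b; unfold gfun; split <;> simp
  calc (1 / 2) * ∑ i, ∑ j,
        (if 0 < pi' i j + pi' j i then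
          pi' i j * pi' j i / (pi' i j + pi' j i) * d (x (φ i)) (x (φ j)) ^ 2 else 0)
      = (1 / 2) * ∑ i, ∑ j, gfun (pi' i j) (pi' j i) * d (x (φ i)) (x (φ j)) ^ 2 := by
        rw [Finset.sum_congr rfl fun i _ => Finset.sum_congr rfl fun j _ => hF'g i j]
    _ = (1 / 2) * ∑ a, ∑ b, ∑ i, ∑ j, (if φ i = a ∧ φ j = b then
          gfun (pi' i j) (pi' j i) * d (x (φ i)) (x (φ j)) ^ 2 else 0) := by
        rw [collapse2 φ (fun i j => gfun (pi' i j) (pi' j i) * d (x (φ i)) (x (φ j)) ^ 2)]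
    _ ≤ (1 / 2) * ∑ a, ∑ b, gfun (Pi a b) (Pi b a) * d (x a) (x b) ^ 2 := by
        refine mul_le_mul_of_nonneg_left ?_ (by norm_num)
        exact Finset.sum_le_sum fun a _ => Finset.sum_le_sum fun b _ => key2 a b
    _ = (1 / 2) * ∑ a, ∑ b, (if 0 < Pi a b + Pi b a then
          Pi a b * Pi b a / (Pi a b + Pi b a) * d (x a) (x b) ^ 2 else 0) := by
        rw [Finset.sum_congr rfl fun a _ => Finset.sum_congr rfl fun b _ => (hFg a b).symm]
    _ ≤ ∑ a, ∑ b, p a * q b * d (x a) (x b) ^ 2 := key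
    _ = ∑ i, ∑ j, p' i * q' j * d (x (φ i)) (x (φ j)) ^ 2 := hRHS
end

section
/- Fix n and nonnegative reals p₁,…,pₙ, q₁,…,qₙ with ∑pᵢ = ∑qⱼ = 1. Let (X,d) be a semimetric space and x₁,…,xₙ ∈ X points satisfying, for every n×n nonnegative matrix (πᵢⱼ) with ∑ⱼ πᵢⱼ = pᵢ + qᵢ for all i, the inequality (1/2)∑_{i,j: πᵢⱼ+πⱼᵢ>0}(πᵢⱼπⱼᵢ/(πᵢⱼ+πⱼᵢ))d(xᵢ,xⱼ)² ≤ ∑ᵢ∑ⱼ pᵢqⱼ d(xᵢ,xⱼ)². Then for any n×n nonnegative matrices A = (aᵢⱼ) and B = (bᵢⱼ) with ∑ₖ aᵢₖ + ∑ₖ b_{kj} = pᵢ + qⱼ for all i,j, one has ∑_{i,j: aᵢⱼ+bᵢⱼ>0}(aᵢⱼbᵢⱼ/(aᵢⱼ+bᵢⱼ))d(xᵢ,xⱼ)² ≤ ∑ᵢ∑ⱼ pᵢqⱼ d(xᵢ,xⱼ)². -/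
lemma key_harm (a₁ b₁ a₂ b₂ D : ℝ) (ha₁ : 0 ≤ a₁) (hb₁ : 0 ≤ b₁)
    (ha₂ : 0 ≤ a₂) (hb₂ : 0 ≤ b₂) (hD : 0 ≤ D) :
    (if 0 < a₁ + b₁ then a₁ * b₁ / (a₁ + b₁) * D else 0) +
      (if 0 < a₂ + b₂ then a₂ * b₂ / (a₂ + b₂) * D else 0)
    ≤ if 0 < (a₁ + b₂) + (a₂ + b₁) then
        (a₁ + b₂) * (a₂ + b₁) / ((a₁ + b₂) + (a₂ + b₁)) * D else 0 := by
  by_cases h1 : 0 < a₁ + b₁ <;> by_cases h2 : 0 < a₂ + b₂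
  · have h3 : 0 < (a₁ + b₂) + (a₂ + b₁) := by linarith
    simp only [h1, h2, h3, if_true]
    have hfrac : a₁ * b₁ / (a₁ + b₁) + a₂ * b₂ / (a₂ + b₂)
        ≤ (a₁ + b₂) * (a₂ + b₁) / ((a₁ + b₂) + (a₂ + b₁)) := by
      rw [div_add_div _ _ (ne_of_gt h1) (ne_of_gt h2), div_le_div_iff₀ (by positivity) h3]
      nlinarith [sq_nonneg (a₁ * a₂ - b₁ * b₂)]
    nlinarith [hfrac, hD]
  · have ha2 : a₂ = 0 := by linarith [add_nonneg ha₂ hb₂]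
    have hb2 : b₂ = 0 := by linarith [add_nonneg ha₂ hb₂]
    subst ha2; subst hb2
    norm_num [h1]
  · have ha1 : a₁ = 0 := by linarith [add_nonneg ha₁ hb₁]
    have hb1 : b₁ = 0 := by linarith [add_nonneg ha₁ hb₁]
    subst ha1; subst hb1
    have h2' : (0:ℝ) < b₂ + a₂ := by linarith
    norm_num [h2, h2']
    rw [mul_comm b₂ a₂, add_comm b₂ a₂]
  · have ha1 : a₁ = 0 := by linarith [add_nonneg ha₁ hb₁]
    have hb1 : b₁ = 0 := by linarith [add_nonneg ha₁ hb₁]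
    have ha2 : a₂ = 0 := by linarith [add_nonneg ha₂ hb₂]
    have hb2 : b₂ = 0 := by linarith [add_nonneg ha₂ hb₂]
    subst ha1; subst hb1; subst ha2; subst hb2
    norm_num

theorem pi_form_implies_AB_form {X : Type*} (d : X → X → ℝ)
    (hsymm : ∀ a b, d a b = d b a)
    (hnonneg : ∀ a b, 0 ≤ d a b)
    (hzero : ∀ a b, d a b = 0 ↔ a = b)
    (n : ℕ) (p q : Fin n → ℝ)
    (hp : ∀ i, 0 ≤ p i) (hq : ∀ j, 0 ≤ q j)
    (hps : ∑ i, p i = 1) (hqs : ∑ j, q j = 1)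
    (x : Fin n → X)
    (hyp : ∀ pi : Fin n → Fin n → ℝ, (∀ i j, 0 ≤ pi i j) →
      (∀ i, ∑ j, pi i j = p i + q i) →
      (1 / 2) * ∑ i, ∑ j,
          (if 0 < pi i j + pi j i then
            pi i j * pi j i / (pi i j + pi j i) * d (x i) (x j) ^ 2 else 0)
        ≤ ∑ i, ∑ j, p i * q j * d (x i) (x j) ^ 2)
    (A B : Fin n → Fin n → ℝ)
    (hA : ∀ i j, 0 ≤ A i j) (hB : ∀ i j, 0 ≤ B i j)
    (hAB : ∀ i j, (∑ k, A i k) + (∑ k, B k j) = p i + q j) :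
    ∑ i, ∑ j,
        (if 0 < A i j + B i j then
          A i j * B i j / (A i j + B i j) * d (x i) (x j) ^ 2 else 0)
      ≤ ∑ i, ∑ j, p i * q j * d (x i) (x j) ^ 2 := by
  set pi : Fin n → Fin n → ℝ := fun i j => A i j + B j i with hpi_def
  have hpin : ∀ i j, 0 ≤ pi i j := fun i j => add_nonneg (hA i j) (hB j i)
  have hpirow : ∀ i, ∑ j, pi i j = p i + q i := by
    intro i
    simp only [hpi_def]
    rw [Finset.sum_add_distrib]
    exact hAB i i
  have H := hyp pi hpin hpirow
  set g : Fin n → Fin n → ℝ := fun i j =>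
    if 0 < A i j + B i j then A i j * B i j / (A i j + B i j) * d (x i) (x j) ^ 2 else 0
    with hg_def
  set h : Fin n → Fin n → ℝ := fun i j =>
    if 0 < pi i j + pi j i then pi i j * pi j i / (pi i j + pi j i) * d (x i) (x j) ^ 2 else 0
    with hh_def
  have hkey : ∀ i j, g i j + g j i ≤ h i j := by
    intro i j
    have := key_harm (A i j) (B i j) (A j i) (B j i) (d (x i) (x j) ^ 2)
      (hA i j) (hB i j) (hA j i) (hB j i) (by positivity)
    simp only [hg_def, hh_def, hpi_def]
    rw [hsymm (x j) (x i)]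
    convert this using 2 <;> ring_nf
  have hsum : ∑ i, ∑ j, (g i j + g j i) ≤ ∑ i, ∑ j, h i j := by
    apply Finset.sum_le_sum
    intro i _
    exact Finset.sum_le_sum fun j _ => hkey i j
  have hswap : ∑ i, ∑ j, g j i = ∑ i, ∑ j, g i j := by rw [Finset.sum_comm]
  have h2 : ∑ i, ∑ j, (g i j + g j i) = 2 * ∑ i, ∑ j, g i j := by
    simp only [Finset.sum_add_distrib]
    rw [hswap]; ring
  linarith [hsum, H]
end

section
/- Let p₅, q₅, π₅₆, π₆₅, S be nonnegative reals with p₅ + q₅ ≤ 2, π₅₆ ≤ p₅ + q₅, π₆₅ ≤ 2 − p₅ − q₅, π₅₆ > 0, π₆₅ > 0, and suppose p₆ ≥ 1 − p₅ − S and q₆ ≥ 1 − q₅ − S with p₆, q₆ ≥ 0. Then p₅q₆ + p₆q₅ − π₅₆π₆₅/(π₅₆+π₆₅) ≥ (p₅−q₅)²/2 − (p₅+q₅)S ≥ −(p₅+q₅)S. -/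
theorem S_estimate (p₅ q₅ p₆ q₆ π₅₆ π₆₅ S : ℝ)
    (hp₅ : 0 ≤ p₅) (hq₅ : 0 ≤ q₅) (hS : 0 ≤ S)
    (hsum : p₅ + q₅ ≤ 2)
    (hπ₅₆pos : 0 < π₅₆) (hπ₆₅pos : 0 < π₆₅)
    (hπ₅₆ : π₅₆ ≤ p₅ + q₅) (hπ₆₅ : π₆₅ ≤ 2 - p₅ - q₅)
    (hp₆ : 0 ≤ p₆) (hq₆ : 0 ≤ q₆)
    (hp₆' : 1 - p₅ - S ≤ p₆) (hq₆' : 1 - q₅ - S ≤ q₆) :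
    (p₅ - q₅) ^ 2 / 2 - (p₅ + q₅) * S
      ≤ p₅ * q₆ + p₆ * q₅ - π₅₆ * π₆₅ / (π₅₆ + π₆₅)
    ∧ -(p₅ + q₅) * S ≤ (p₅ - q₅) ^ 2 / 2 - (p₅ + q₅) * S := by
  have hpos : 0 < π₅₆ + π₆₅ := by linarith
  have key : π₅₆ * π₆₅ / (π₅₆ + π₆₅) ≤ (p₅ + q₅) * (2 - p₅ - q₅) / 2 := by
    rw [div_le_div_iff₀ hpos (by norm_num)]
    nlinarith [mul_pos hπ₅₆pos hπ₆₅pos, mul_nonneg (sub_nonneg.2 hπ₅₆) hπ₆₅pos.le,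
      mul_nonneg (sub_nonneg.2 hπ₆₅) hπ₅₆pos.le,
      mul_nonneg (sub_nonneg.2 hπ₅₆) (sub_nonneg.2 hπ₆₅)]
  constructor
  · nlinarith [mul_le_mul_of_nonneg_left hq₆' hp₅, mul_le_mul_of_nonneg_right hp₆' hq₅]
  · nlinarith [sq_nonneg (p₅ - q₅)]
end
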